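/- Let σ be the sigmoid and let B̄ solve B̄ = σ(a(N₁₁ - (N₁₁+N₁₀)B̄)/γ) with a, γ > 0 and N₁₁, N₁₀ natural numbers, N₁₁ + N₁₀ > 0. Then B̄ > 1/2 if and only if N₁₀ < N₁₁. -/
import Mathlib


noncomputable def sigmoid (z : ℝ) : ℝ := 1 / (1 + Real.exp (-z))

lemma sigmoid_gt_half_iff (z : ℝ) : sigmoid z > 1 / 2 ↔ 0 < z := by
  unfold sigmoid
  have h : 0 < 1 + Real.exp (-z) := by positivity
  rw [gt_iff_lt, div_lt_div_iff₀ (by norm_num) h]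
  constructor
  · intro h2
    have hlt : Real.exp (-z) < 1 := by linarith
    have := Real.exp_lt_one_iff.mp hlt
    linarith
  · intro h2
    have : Real.exp (-z) < 1 := Real.exp_lt_one_iff.mpr (by linarith)
    linarith

theorem stmt_9 (B a γ : ℝ) (N11 N10 : ℕ)
    (ha : 0 < a) (hγ : 0 < γ) (hN : 0 < N11 + N10)
    (hfix : B = sigmoid (a * ((N11 : ℝ) - ((N11 : ℝ) + (N10 : ℝ)) * B) / γ)) :
    B > 1 / 2 ↔ N10 < N11 := by
  set X : ℝ := (N11 : ℝ) - ((N11 : ℝ) + (N10 : ℝ)) * B with hX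
  have hS : (0 : ℝ) < (N11 : ℝ) + (N10 : ℝ) := by
    have : (0 : ℝ) < ((N11 + N10 : ℕ) : ℝ) := by exact_mod_cast hN
    push_cast at this; linarith
  have keyX : 0 < a * X / γ ↔ 0 < X := by
    constructor
    · intro h
      by_contra hc
      push_neg at hc
      have : a * X / γ ≤ 0 :=
        div_nonpos_of_nonpos_of_nonneg (mul_nonpos_of_nonneg_of_nonpos ha.le hc) hγ.le
      linarith
    · intro h
      exact div_pos (mul_pos ha h) hγ
  have key : B > 1 / 2 ↔ 0 < X := by
    rw [hfix, sigmoid_gt_half_iff]; exact keyX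
  constructor
  · intro hB
    have hx : 0 < X := key.mp hB
    have hB2 : (N11 : ℝ) + (N10 : ℝ) < ((N11 : ℝ) + (N10 : ℝ)) * (2 * B) := by
      nlinarith
    have : (N10 : ℝ) < (N11 : ℝ) := by nlinarith
    exact_mod_cast this
  · intro hlt
    by_contra hB
    push_neg at hB
    have h10 : (N10 : ℝ) < (N11 : ℝ) := by exact_mod_cast hlt
    have hx : 0 < X := by nlinarith
    exact absurd (key.mpr hx) (not_lt.mpr hB)
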